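/- Let Z₁, Z₂ ∈ ℝ² be nonzero vectors such that Z₁ + Z₂ ≠ 0 and Z₁ − Z₂ ≠ 0, and let Z̃₁ = (−|Z₁ₓ|, |Z₁ᵧ|), Z̃₂ = (−|Z₂ₓ|, −|Z₂ᵧ|). Suppose also Z̃₁ + Z̃₂ ≠ 0 and Z̃₁ − Z̃₂ ≠ 0. Then the potential U(Z₁, Z₂) = 2/|Z₁| + 2/|Z₂| + 1/|Z₁+Z₂| + 1/|Z₁−Z₂| satisfies U(Z₁, Z₂) ≥ U(Z̃₁, Z̃₂), with equality if and only if Z₁ and Z₂ lie in two adjacent closed quadrants. -/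
import Mathlib


open Real

/-- Euclidean norm on `ℝ × ℝ`. -/
noncomputable def n2 (p : ℝ × ℝ) : ℝ := Real.sqrt (p.1 ^ 2 + p.2 ^ 2)

/-- Membership in the four closed quadrants. -/
def inQ1 (p : ℝ × ℝ) : Prop := 0 ≤ p.1 ∧ 0 ≤ p.2
def inQ2 (p : ℝ × ℝ) : Prop := p.1 ≤ 0 ∧ 0 ≤ p.2
def inQ3 (p : ℝ × ℝ) : Prop := p.1 ≤ 0 ∧ p.2 ≤ 0
def inQ4 (p : ℝ × ℝ) : Prop := 0 ≤ p.1 ∧ p.2 ≤ 0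

/-- `Z` and `W` lie in two adjacent closed quadrants (sharing a boundary axis). -/
def AdjacentQuadrants (Z W : ℝ × ℝ) : Prop :=
  (inQ1 Z ∧ inQ2 W) ∨ (inQ2 Z ∧ inQ1 W) ∨ (inQ2 Z ∧ inQ3 W) ∨ (inQ3 Z ∧ inQ2 W) ∨
  (inQ3 Z ∧ inQ4 W) ∨ (inQ4 Z ∧ inQ3 W) ∨ (inQ4 Z ∧ inQ1 W) ∨ (inQ1 Z ∧ inQ4 W)

/-- The reflections `Z̃₁ = (−|Z₁ₓ|, |Z₁ᵧ|)`, `Z̃₂ = (−|Z₂ₓ|, −|Z₂ᵧ|)`. -/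
noncomputable def refl1 (Z : ℝ × ℝ) : ℝ × ℝ := (-|Z.1|, |Z.2|)
noncomputable def refl2 (Z : ℝ × ℝ) : ℝ × ℝ := (-|Z.1|, -|Z.2|)

/-- The parallelogram four-body potential in relative coordinates. -/
noncomputable def Upot (Z W : ℝ × ℝ) : ℝ :=
  2 / n2 Z + 2 / n2 W + 1 / n2 (Z + W) + 1 / n2 (Z - W)

lemma aux_pos (p : ℝ × ℝ) (h : p ≠ 0) : 0 < p.1 ^ 2 + p.2 ^ 2 := by
  rcases eq_or_ne p.1 0 with h1 | h1
  · have h2 : p.2 ≠ 0 := fun h2 => h (Prod.ext h1 h2)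
    positivity
  · positivity

lemma sq_cmp (u v : ℝ) : (|u| - |v|) ^ 2 ≤ (u + v) ^ 2 := by
  nlinarith [neg_abs_le (u*v), abs_mul u v, sq_abs u, sq_abs v]

lemma sq_eq_iff' (u v : ℝ) : (|u| - |v|) ^ 2 = (u + v) ^ 2 ↔ u * v ≤ 0 := by
  constructor
  · intro h
    nlinarith [abs_nonneg (u*v), abs_mul u v, sq_abs u, sq_abs v]
  · intro h
    have h2 : |u*v| = -(u*v) := abs_of_nonpos h
    nlinarith [abs_mul u v, sq_abs u, sq_abs v]

lemma g_strict (R s t : ℝ) (hs : 0 ≤ s) (hst : s < t) (hRt : 0 < R - 2*t) :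
    1/Real.sqrt (R+2*s) + 1/Real.sqrt (R-2*s) < 1/Real.sqrt (R+2*t) + 1/Real.sqrt (R-2*t) := by
  have hRs : 0 < R - 2*s := by linarith
  have hcs : 0 < R + 2*s := by linarith
  have hct : 0 < R + 2*t := by linarith
  set a := Real.sqrt (R-2*t) with hadef
  set b := Real.sqrt (R-2*s) with hbdef
  set c := Real.sqrt (R+2*s) with hcdef
  set d := Real.sqrt (R+2*t) with hddef
  have ha : 0 < a := Real.sqrt_pos.mpr hRt
  have hb : 0 < b := Real.sqrt_pos.mpr hRs
  have hc : 0 < c := Real.sqrt_pos.mpr hcs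
  have hd : 0 < d := Real.sqrt_pos.mpr hct
  have ha2 : a^2 = R-2*t := Real.sq_sqrt hRt.le
  have hb2 : b^2 = R-2*s := Real.sq_sqrt hRs.le
  have hc2 : c^2 = R+2*s := Real.sq_sqrt hcs.le
  have hd2 : d^2 = R+2*t := Real.sq_sqrt hct.le
  have hac : a < c := by rw [hadef, hcdef]; exact Real.sqrt_lt_sqrt hRt.le (by linarith)
  have hbd : b < d := by rw [hbdef, hddef]; exact Real.sqrt_lt_sqrt hRs.le (by linarith)
  have hcd : c < d := by rw [hcdef, hddef]; exact Real.sqrt_lt_sqrt hcs.le (by linarith)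
  have key : a*b*(a+b) < c*d*(c+d) := by nlinarith [mul_pos ha hb, mul_pos hc hd]
  have e1 : (b-a)/(a*b) = (2*t-2*s)/(a*b*(a+b)) := by
    rw [div_eq_div_iff (by positivity) (by positivity)]
    linear_combination (a*b)*hb2 - (a*b)*ha2
  have e2 : (d-c)/(c*d) = (2*t-2*s)/(c*d*(c+d)) := by
    rw [div_eq_div_iff (by positivity) (by positivity)]
    linear_combination (c*d)*hd2 - (c*d)*hc2
  have hlt : (2*t-2*s)/(c*d*(c+d)) < (2*t-2*s)/(a*b*(a+b)) :=
    div_lt_div_of_pos_left (by linarith) (by positivity) key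
  rw [← e1, ← e2] at hlt
  have q1 : 1/c - 1/d = (d-c)/(c*d) := by field_simp
  have q2 : 1/a - 1/b = (b-a)/(a*b) := by field_simp
  linarith

lemma gabs (R t : ℝ) :
    1/Real.sqrt (R+2*t) + 1/Real.sqrt (R-2*t) = 1/Real.sqrt (R+2*|t|) + 1/Real.sqrt (R-2*|t|) := by
  rcases le_or_gt 0 t with h | h
  · rw [abs_of_nonneg h]
  · rw [abs_of_neg h, show R+2*-t = R-2*t by ring, show R-2*-t = R+2*t by ring, add_comm]

lemma mul_np1 {u v : ℝ} (hu : u ≤ 0) (hv : 0 ≤ v) : u * v ≤ 0 :=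
  mul_nonpos_iff.mpr (Or.inr ⟨hu, hv⟩)
lemma mul_np2 {u v : ℝ} (hu : 0 ≤ u) (hv : v ≤ 0) : u * v ≤ 0 :=
  mul_nonpos_iff.mpr (Or.inl ⟨hu, hv⟩)

lemma adj_iff (x1 y1 x2 y2 : ℝ) :
    AdjacentQuadrants (x1, y1) (x2, y2) ↔ x1 * x2 * (y1 * y2) ≤ 0 := by
  simp only [AdjacentQuadrants, inQ1, inQ2, inQ3, inQ4]
  constructor
  · rintro (⟨⟨a,b⟩,⟨c,d⟩⟩|⟨⟨a,b⟩,⟨c,d⟩⟩|⟨⟨a,b⟩,⟨c,d⟩⟩|⟨⟨a,b⟩,⟨c,d⟩⟩|⟨⟨a,b⟩,⟨c,d⟩⟩|⟨⟨a,b⟩,⟨c,d⟩⟩|⟨⟨a,b⟩,⟨c,d⟩⟩|⟨⟨a,b⟩,⟨c,d⟩⟩)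
    · exact mul_np1 (mul_np2 a c) (mul_nonneg b d)
    · exact mul_np1 (mul_np1 a c) (mul_nonneg b d)
    · exact mul_np2 (mul_nonneg (neg_nonneg.mpr a) (neg_nonneg.mpr c) |>.trans_eq (by ring)) (mul_np2 b d)
    · exact mul_np2 (mul_nonneg (neg_nonneg.mpr a) (neg_nonneg.mpr c) |>.trans_eq (by ring)) (mul_np1 b d)
    · exact mul_np1 (mul_np1 a c) (mul_nonneg (neg_nonneg.mpr b) (neg_nonneg.mpr d) |>.trans_eq (by ring))
    · exact mul_np1 (mul_np2 a c) (mul_nonneg (neg_nonneg.mpr b) (neg_nonneg.mpr d) |>.trans_eq (by ring))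
    · exact mul_np2 (mul_nonneg a c) (mul_np1 b d)
    · exact mul_np2 (mul_nonneg a c) (mul_np2 b d)
  · intro h
    rcases mul_nonpos_iff.mp h with ⟨hu, hv⟩ | ⟨hu, hv⟩
    · rcases mul_nonneg_iff.mp hu with ⟨a, c⟩ | ⟨a, c⟩ <;>
        rcases mul_nonpos_iff.mp hv with ⟨b, d⟩ | ⟨b, d⟩
      · exact Or.inr (Or.inr (Or.inr (Or.inr (Or.inr (Or.inr (Or.inr ⟨⟨a,b⟩,⟨c,d⟩⟩))))))
      · exact Or.inr (Or.inr (Or.inr (Or.inr (Or.inr (Or.inr (Or.inl ⟨⟨a,b⟩,⟨c,d⟩⟩))))))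
      · exact Or.inr (Or.inr (Or.inl ⟨⟨a,b⟩,⟨c,d⟩⟩))
      · exact Or.inr (Or.inr (Or.inr (Or.inl ⟨⟨a,b⟩,⟨c,d⟩⟩)))
    · rcases mul_nonpos_iff.mp hu with ⟨a, c⟩ | ⟨a, c⟩ <;>
        rcases mul_nonneg_iff.mp hv with ⟨b, d⟩ | ⟨b, d⟩
      · exact Or.inl ⟨⟨a,b⟩,⟨c,d⟩⟩
      · exact Or.inr (Or.inr (Or.inr (Or.inr (Or.inr (Or.inl ⟨⟨a,b⟩,⟨c,d⟩⟩)))))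
      · exact Or.inr (Or.inl ⟨⟨a,b⟩,⟨c,d⟩⟩)
      · exact Or.inr (Or.inr (Or.inr (Or.inr (Or.inl ⟨⟨a,b⟩,⟨c,d⟩⟩))))

/-- `U(Z₁, Z₂) ≥ U(Z̃₁, Z̃₂)`, with equality iff `Z₁` and `Z₂` lie in two adjacent closed
quadrants. -/
theorem stmt17 (Z1 Z2 : ℝ × ℝ) (h1 : Z1 ≠ 0) (h2 : Z2 ≠ 0)
    (hp : Z1 + Z2 ≠ 0) (hm : Z1 - Z2 ≠ 0)
    (hp' : refl1 Z1 + refl2 Z2 ≠ 0) (hm' : refl1 Z1 - refl2 Z2 ≠ 0) :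
    Upot Z1 Z2 ≥ Upot (refl1 Z1) (refl2 Z2) ∧
    (Upot Z1 Z2 = Upot (refl1 Z1) (refl2 Z2) ↔ AdjacentQuadrants Z1 Z2) := by
  obtain ⟨x1, y1⟩ := Z1
  obtain ⟨x2, y2⟩ := Z2
  set R : ℝ := x1^2 + y1^2 + x2^2 + y2^2 with hRdef
  set t : ℝ := x1*x2 + y1*y2 with htdef
  set s : ℝ := |x1| * |x2| - |y1| * |y2| with hsdef
  have hApos := aux_pos _ hp
  have hBpos := aux_pos _ hm
  have hApos' := aux_pos _ hp'
  have hBpos' := aux_pos _ hm'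
  simp only [refl1, refl2, Prod.fst_add, Prod.snd_add, Prod.fst_sub, Prod.snd_sub] at hApos hBpos hApos' hBpos'
  have hA : 0 < R + 2*t := by nlinarith [hApos]
  have hB : 0 < R - 2*t := by nlinarith [hBpos]
  have hA' : 0 < R + 2*s := by nlinarith [hApos', sq_abs x1, sq_abs x2, sq_abs y1, sq_abs y2]
  have hB' : 0 < R - 2*s := by nlinarith [hBpos', sq_abs x1, sq_abs x2, sq_abs y1, sq_abs y2]
  have eU1 : Upot (x1, y1) (x2, y2) =
      2/Real.sqrt (x1^2+y1^2) + 2/Real.sqrt (x2^2+y2^2)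
      + (1/Real.sqrt (R+2*|t|) + 1/Real.sqrt (R-2*|t|)) := by
    rw [← gabs]
    simp only [Upot, n2, Prod.fst_add, Prod.snd_add, Prod.fst_sub, Prod.snd_sub]
    rw [show (x1+x2)^2+(y1+y2)^2 = R+2*t from by rw [hRdef, htdef]; ring,
        show (x1-x2)^2+(y1-y2)^2 = R-2*t from by rw [hRdef, htdef]; ring]
    ring
  have eU2 : Upot (refl1 (x1, y1)) (refl2 (x2, y2)) =
      2/Real.sqrt (x1^2+y1^2) + 2/Real.sqrt (x2^2+y2^2)
      + (1/Real.sqrt (R+2*|s|) + 1/Real.sqrt (R-2*|s|)) := by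
    rw [← gabs]
    simp only [Upot, n2, refl1, refl2, Prod.fst_add, Prod.snd_add, Prod.fst_sub, Prod.snd_sub]
    rw [show (-|x1|)^2 + |y1|^2 = x1^2+y1^2 from by
          linear_combination sq_abs x1 + sq_abs y1,
        show (-|x2|)^2 + (-|y2|)^2 = x2^2+y2^2 from by
          linear_combination sq_abs x2 + sq_abs y2,
        show (-|x1| + -|x2|)^2 + (|y1| + -|y2|)^2 = R+2*s from by
          rw [hRdef, hsdef]; linear_combination sq_abs x1 + sq_abs x2 + sq_abs y1 + sq_abs y2,
        show (-|x1| - -|x2|)^2 + (|y1| - -|y2|)^2 = R-2*s from by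
          rw [hRdef, hsdef]; linear_combination sq_abs x1 + sq_abs x2 + sq_abs y1 + sq_abs y2]
    ring
  -- |s| ≤ |t|
  have hsq : s^2 ≤ t^2 := by
    have := sq_cmp (x1*x2) (y1*y2)
    rw [abs_mul, abs_mul] at this
    calc s^2 = (|x1| * |x2| - |y1| * |y2|)^2 := by rw [hsdef]
      _ ≤ (x1*x2 + y1*y2)^2 := this
      _ = t^2 := by rw [htdef]
  have hst : |s| ≤ |t| := by
    rw [← Real.sqrt_sq_eq_abs, ← Real.sqrt_sq_eq_abs]
    exact Real.sqrt_le_sqrt hsq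
  have hiff : |s| = |t| ↔ AdjacentQuadrants (x1, y1) (x2, y2) := by
    rw [adj_iff]
    constructor
    · intro h
      have h2 : s^2 = t^2 := by
        have := congrArg (· ^ 2) h
        simpa [sq_abs] using this
      refine (sq_eq_iff' (x1*x2) (y1*y2)).mp ?_
      rw [abs_mul, abs_mul]
      calc (|x1| * |x2| - |y1| * |y2|)^2 = s^2 := by rw [hsdef]
        _ = t^2 := h2
        _ = (x1*x2 + y1*y2)^2 := by rw [htdef]
    · intro h
      have h2 := (sq_eq_iff' (x1*x2) (y1*y2)).mpr h
      rw [abs_mul, abs_mul] at h2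
      have h3 : s^2 = t^2 := by rw [hsdef, htdef]; exact h2
      rw [← Real.sqrt_sq_eq_abs, ← Real.sqrt_sq_eq_abs, h3]
  have hRt : 0 < R - 2*|t| := by
    rcases abs_cases t with ⟨h, _⟩ | ⟨h, _⟩ <;> rw [h] <;> linarith
  rcases eq_or_lt_of_le hst with heq | hlt
  · have hEq : Upot (x1, y1) (x2, y2) = Upot (refl1 (x1, y1)) (refl2 (x2, y2)) := by
      rw [eU1, eU2, heq]
    exact ⟨ge_of_eq hEq, iff_of_true hEq (hiff.mp heq)⟩
  · have hGlt : 1/Real.sqrt (R+2*|s|) + 1/Real.sqrt (R-2*|s|)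
        < 1/Real.sqrt (R+2*|t|) + 1/Real.sqrt (R-2*|t|) :=
      g_strict R (|s|) (|t|) (abs_nonneg s) hlt hRt
    have hUlt : Upot (refl1 (x1, y1)) (refl2 (x2, y2)) < Upot (x1, y1) (x2, y2) := by
      rw [eU1, eU2]; linarith
    refine ⟨le_of_lt hUlt, iff_of_false (by linarith) ?_⟩
    intro hadj
    exact absurd (hiff.mpr hadj) (ne_of_lt hlt)
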